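/- Assume the Common Givens: P_i is a preference order on C consistent with Q; the query is the pair (c_j,c_k) with P_i(c_j,c_k); and neither (c_j,c_k) nor (c_k,c_j) belongs to Q. Let P' ∈ μ(P_i), and let a, b ∈ C be two candidates such that P_i and P' order the pair {a,b} the same way, a is immediately above b in P_i (i.e. P_i(a,b) and the open segment (a, P_i, b) is empty), but the open segment (a, P', b) is nonempty. Then a ∈ [∞, P', c_k] (a is c_k or above c_k in P') and b ∈ [c_j, P', −∞] (b is c_j or below c_j in P'). -/

import Mathlib

/-!
Walk down `P'` from `a` to `b` through immediate successors. If `Pi` agreed with `P'` on every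
`P'`-adjacent pair of this walk, it would rank the intermediate candidate `d` strictly between
`a` and `b`, contradicting that `a` is immediately above `b` in `Pi`. So some `P'`-adjacent pair
`u, v` in `[a, P', b]` is ordered the other way by `Pi`. Exchanging two adjacent candidates
reverses that pair only: it lowers the swap distance to `Pi` and keeps every constraint of `Q`
(all of which `Pi` satisfies), so by minimality of `P'` it must break the constraint that puts
`ck` above `cj`, i.e. `(u, v) = (ck, cj)`.
-/

/-- A preference order: a strict total order on candidates. -/
def IsPref {C : Type*} (P : C → C → Prop) : Prop :=
  (∀ a b : C, a ≠ b → P a b ∨ P b a) ∧ (∀ a : C, ¬ P a a) ∧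
    ∀ a b c : C, P a b → P b c → P a c

/-- The (closed) segment `[c, P, c']` of candidates between `c` and `c'`. -/
def seg {C : Type*} (P : C → C → Prop) (c c' : C) : Set C :=
  {d : C | (d = c ∨ P c d) ∧ (d = c' ∨ P d c')}

/-- `Q` is a strict partial order (consistent, transitively closed reported preferences). -/
def IsSPO {C : Type*} (Q : C → C → Prop) : Prop :=
  (∀ a : C, ¬ Q a a) ∧ ∀ a b c : C, Q a b → Q b c → Q a c

/-- `P` is consistent with (extends) the reported preferences `Q`, written `P ⊨ Q`. -/
def Extends {C : Type*} (P Q : C → C → Prop) : Prop := ∀ a b : C, Q a b → P a b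

/-- The swap distance between two preference orders: the number of (unordered) pairs of
candidates ordered differently, counted here as ordered pairs `(a, b)` with
`P a b` and `P' b a`. -/
noncomputable def dswap {C : Type*} [Fintype C] (P P' : C → C → Prop) : ℕ :=
  Set.ncard {p : C × C | P p.1 p.2 ∧ P' p.2 p.1}

/-- `P` is a preference order consistent with the transitive closure of `Q ∪ {(ck, cj)}`
(for a transitive total order this is the same as extending `Q` and putting `ck` above `cj`). -/
def Feasible {C : Type*} (Q : C → C → Prop) (cj ck : C) (P : C → C → Prop) : Prop :=
  IsPref P ∧ Extends P Q ∧ P ck cj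

/-- `P ∈ μ(Pi)`: among all preference orders consistent with the transitive closure of
`Q ∪ {(ck, cj)}`, `P` minimizes the swap distance to `Pi`. -/
def InMu {C : Type*} [Fintype C] (Q : C → C → Prop) (cj ck : C)
    (Pi P : C → C → Prop) : Prop :=
  Feasible Q cj ck P ∧ ∀ R : C → C → Prop, Feasible Q cj ck R → dswap Pi P ≤ dswap Pi R

section

variable {C : Type*}

def IsCovBy (P : C → C → Prop) (u v : C) : Prop :=
  P u v ∧ ∀ w, ¬ (P u w ∧ P w v)

theorem seg_subset_seg {P : C → C → Prop} (htr : ∀ a b c, P a b → P b c → P a c)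
    {x y x' y' : C} (hx : x' ∈ seg P x y) (hy : y' ∈ seg P x y) :
    seg P x' y' ⊆ seg P x y := by
  rintro w ⟨hw₁, hw₂⟩
  refine ⟨?_, ?_⟩
  · rcases hw₁ with rfl | hw₁
    · exact hx.1
    · rcases hx.1 with rfl | hxx'
      · exact .inr hw₁
      · exact .inr (htr _ _ _ hxx' hw₁)
  · rcases hw₂ with rfl | hw₂
    · exact hy.2
    · rcases hy.2 with rfl | hy'y
      · exact .inr hw₂
      · exact .inr (htr _ _ _ hw₂ hy'y)

namespace IsPref

variable {P : C → C → Prop}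

theorem asymm (hP : IsPref P) {x y : C} (hxy : P x y) : ¬ P y x :=
  fun hyx => hP.2.1 x (hP.2.2 x y x hxy hyx)

protected theorem flip (hP : IsPref P) : IsPref (flip P) :=
  ⟨fun a b hab => (hP.1 a b hab).symm, hP.2.1, fun a b c hab hbc => hP.2.2 c b a hbc hab⟩

theorem comap (hP : IsPref P) {f : C → C} (hf : f.Injective) :
    IsPref (fun x y => P (f x) (f y)) :=
  ⟨fun _ _ hab => hP.1 _ _ (hf.ne hab), fun _ => hP.2.1 _, fun _ _ _ => hP.2.2 _ _ _⟩

theorem wellFounded [Finite C] (hP : IsPref P) : WellFounded P :=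
  haveI : IsTrans C P := ⟨hP.2.2⟩
  haveI : Std.Irrefl P := ⟨hP.2.1⟩
  Finite.wellFounded_of_trans_of_irrefl P

theorem exists_covBy [Finite C] (hP : IsPref P) {x y : C} (hxy : P x y) :
    ∃ s, IsCovBy P x s ∧ (s = y ∨ P s y) := by
  obtain ⟨s, hxs, hmin⟩ := hP.wellFounded.has_min {w | P x w} ⟨y, hxy⟩
  refine ⟨s, ⟨hxs, fun w hw => hmin w hw.1 hw.2⟩, ?_⟩
  by_cases hsy : s = y
  · exact .inl hsy
  · exact .inr ((hP.1 s y hsy).resolve_right fun hys => hmin y hxy hys)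

theorem rel_of_forall_covBy [Finite C] (hP : IsPref P) {R : C → C → Prop}
    (hR : ∀ a b c, R a b → R b c → R a c) {x y : C} (hxy : P x y)
    (hcov : ∀ u ∈ seg P x y, ∀ v ∈ seg P x y, IsCovBy P u v → R u v) : R x y := by
  suffices ∀ u ∈ seg P x y, P u y → R u y from this x ⟨.inl rfl, .inr hxy⟩ hxy
  intro u
  induction u using hP.flip.wellFounded.induction with
  | _ u ih =>
    intro hu huy
    obtain ⟨s, hus, hsy⟩ := hP.exists_covBy huy
    have hs : s ∈ seg P x y :=
      ⟨.inr (hu.1.elim (· ▸ hus.1) (hP.2.2 _ _ _ · hus.1)), hsy⟩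
    have hRus := hcov u hu s hs hus
    rcases hsy with rfl | hsy
    · exact hRus
    · exact hR _ _ _ hRus (ih s hus.1 hs hsy)

end IsPref

theorem IsCovBy.iff_of_ne {P : C → C → Prop} (hP : IsPref P) {u v w : C} (huv : IsCovBy P u v)
    (hwu : w ≠ u) (hwv : w ≠ v) : (P w u ↔ P w v) ∧ (P u w ↔ P v w) := by
  refine ⟨⟨(hP.2.2 _ _ _ · huv.1), fun h => ?_⟩, ⟨fun h => ?_, hP.2.2 _ _ _ huv.1⟩⟩
  · exact (hP.1 w u hwu).resolve_right fun huw => huv.2 w ⟨huw, h⟩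
  · exact (hP.1 v w hwv.symm).resolve_right fun hwv' => huv.2 w ⟨h, hwv'⟩

def swapRel [DecidableEq C] (P : C → C → Prop) (u v : C) : C → C → Prop :=
  fun x y => P (Equiv.swap u v x) (Equiv.swap u v y)

section swapRel

variable [DecidableEq C] {P : C → C → Prop} {u v : C}

theorem IsPref.swapRel (hP : IsPref P) : IsPref (swapRel P u v) :=
  hP.comap (Equiv.swap u v).injective

theorem swapRel_right_left : swapRel P u v v u ↔ P u v := by
  simp [swapRel]

theorem IsCovBy.swapRel_iff (hP : IsPref P) (huv : IsCovBy P u v) {x y : C}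
    (h₁ : ¬ (x = u ∧ y = v)) (h₂ : ¬ (x = v ∧ y = u)) : swapRel P u v x y ↔ P x y := by
  have hirr := hP.2.1
  have hcov := fun w => huv.iff_of_ne hP (w := w)
  unfold swapRel
  by_cases hxu : x = u <;> by_cases hxv : x = v <;> by_cases hyu : y = u <;>
    by_cases hyv : y = v <;> simp_all [Equiv.swap_apply_of_ne_of_ne]

end swapRel

theorem dswap_lt_of_iff_off_pair [Fintype C] {Pi P R : C → C → Prop} (hPi : IsPref Pi)
    (hR : IsPref R) {u v : C} (hvu : Pi v u) (huv : P u v) (hRvu : R v u)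
    (hagree : ∀ x y, ¬ (x = u ∧ y = v) → ¬ (x = v ∧ y = u) → (R x y ↔ P x y)) :
    dswap Pi R < dswap Pi P := by
  refine Set.ncard_lt_ncard ((Set.ssubset_iff_of_subset ?_).2
    ⟨(v, u), ⟨hvu, huv⟩, fun h => hR.asymm hRvu h.2⟩)
  rintro ⟨x, y⟩ ⟨hxy, hRyx⟩
  refine ⟨hxy, (hagree y x ?_ ?_).1 hRyx⟩
  · rintro ⟨rfl, rfl⟩
    exact hR.asymm hRvu hRyx
  · rintro ⟨rfl, rfl⟩
    exact hPi.asymm hvu hxy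

theorem Feasible.swapRel_of_covBy [DecidableEq C] {Q Pi P : C → C → Prop} {cj ck u v : C}
    (hP : Feasible Q cj ck P) (hPi : IsPref Pi) (hPiQ : Extends Pi Q) (huv : IsCovBy P u v)
    (hvu : Pi v u) (hne : ¬ (u = ck ∧ v = cj)) : Feasible Q cj ck (swapRel P u v) := by
  obtain ⟨hPref, hPQ, hkj⟩ := hP
  have hpreserve : ∀ x y, P x y → ¬ (x = u ∧ y = v) → swapRel P u v x y := by
    intro x y hxy h₁
    by_cases h₂ : x = v ∧ y = u
    · obtain ⟨rfl, rfl⟩ := h₂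
      exact swapRel_right_left.2 huv.1
    · exact (huv.swapRel_iff hPref h₁ h₂).2 hxy
  refine ⟨hPref.swapRel, fun x y hxy => hpreserve x y (hPQ x y hxy) ?_,
    hpreserve ck cj hkj fun h => hne ⟨h.1.symm, h.2.symm⟩⟩
  rintro ⟨rfl, rfl⟩
  exact hPi.asymm hvu (hPiQ _ _ hxy)

theorem InMu.eq_of_covBy_of_not_rel [Fintype C] {Q Pi P : C → C → Prop} {cj ck u v : C}
    (hmu : InMu Q cj ck Pi P) (hPi : IsPref Pi) (hPiQ : Extends Pi Q) (huv : IsCovBy P u v)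
    (hPiuv : ¬ Pi u v) : u = ck ∧ v = cj := by
  classical
  have hP := hmu.1.1
  have hvu : Pi v u := (hPi.1 u v fun h => hP.2.1 u (h ▸ huv.1)).resolve_left hPiuv
  by_contra hne
  have hfeas := hmu.1.swapRel_of_covBy hPi hPiQ huv hvu hne
  exact (hmu.2 _ hfeas).not_gt <| dswap_lt_of_iff_off_pair hPi hfeas.1 hvu huv.1
    (swapRel_right_left.2 huv.1) fun _ _ => huv.swapRel_iff hP

end

theorem statement10 {C : Type*} [Fintype C]
    (Q : C → C → Prop)
    (Pi : C → C → Prop) (hPi : IsPref Pi) (hPiQ : Extends Pi Q)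
    (cj ck : C)
    (P' : C → C → Prop) (hmu : InMu Q cj ck Pi P')
    (a b : C)
    (hadj : ∀ d : C, ¬ (Pi a d ∧ Pi d b))
    (hopen : ∃ d : C, P' a d ∧ P' d b) :
    (a = ck ∨ P' a ck) ∧ (b = cj ∨ P' cj b) := by
  have hP' := hmu.1.1
  obtain ⟨d, had, hdb⟩ := hopen
  have hab := hP'.2.2 a d b had hdb
  obtain ⟨u, hu, v, hv, huv, hPiuv⟩ :
      ∃ u ∈ seg P' a b, ∃ v ∈ seg P' a b, IsCovBy P' u v ∧ ¬ Pi u v := by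
    by_contra! hagree
    have ha : a ∈ seg P' a b := ⟨.inl rfl, .inr hab⟩
    have hb : b ∈ seg P' a b := ⟨.inr hab, .inl rfl⟩
    have hd : d ∈ seg P' a b := ⟨.inr had, .inr hdb⟩
    have hagree_in {x y} (hx : x ∈ seg P' a b) (hy : y ∈ seg P' a b) :
        ∀ u ∈ seg P' x y, ∀ v ∈ seg P' x y, IsCovBy P' u v → Pi u v :=
      fun u hu v hv =>
        hagree u (seg_subset_seg hP'.2.2 hx hy hu) v (seg_subset_seg hP'.2.2 hx hy hv)
    exact hadj d ⟨hP'.rel_of_forall_covBy hPi.2.2 had (hagree_in ha hd),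
      hP'.rel_of_forall_covBy hPi.2.2 hdb (hagree_in hd hb)⟩
  obtain ⟨rfl, rfl⟩ := hmu.eq_of_covBy_of_not_rel hPi hPiQ huv hPiuv
  exact ⟨hu.1.imp_left Eq.symm, hv.2.imp_left Eq.symm⟩
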